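/- Let (X, {R_0,...,R_d}) be a symmetric association scheme with Γ = (X, R_1) connected, H the unweighted distribution diagram of R_1, and suppose H' = H \ {0,1} is disconnected. Let Ĩ = {i : 1 ≤ i ≤ d, p_{11}^i = p_{11}^0}, let Ũ be the vertex set of a connected component of H' having more than one vertex which minimizes Σ_{i∈Ũ} v_i among all such components, and let W̃ = {2,...,d} \ (Ĩ ∪ Ũ). If W̃ ≠ ∅, then Γ has diameter two; equivalently, p_{11}^i > 0 for every i with 1 < i ≤ d. -/

import Mathlib

/-- A symmetric association scheme with `d` classes on a finite vertex set `X`: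
a partition of `X × X` into nonempty symmetric relations `R 0, …, R d`, where
`R 0` is the identity relation, together with intersection numbers `p i j k`. -/
structure SymAssocScheme (X : Type*) [Fintype X] (d : ℕ) where
  R : Fin (d + 1) → X → X → Prop
  R_nonempty : ∀ i, ∃ a b, R i a b
  R_symm : ∀ i a b, R i a b → R i b a
  R_zero : ∀ a b, R 0 a b ↔ a = b
  R_unique : ∀ a b, ∃! i, R i a b
  p : Fin (d + 1) → Fin (d + 1) → Fin (d + 1) → ℕ
  p_spec : ∀ (i j k : Fin (d + 1)) (a b : X), R k a b →
    {c : X | R i a c ∧ R j c b}.ncard = p i j k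

namespace SymAssocScheme

variable {X : Type*} [Fintype X] {d : ℕ}

/-- The (simple) graph `Γ = (X, R_i)` of the basis relation `R_i`. -/
def graph (A : SymAssocScheme X d) (i : Fin (d + 1)) : SimpleGraph X where
  Adj a b := a ≠ b ∧ A.R i a b
  symm := ⟨fun a b h => ⟨h.1.symm, A.R_symm i a b h.2⟩⟩
  loopless := ⟨fun a h => h.1 rfl⟩

/-- The unweighted distribution diagram `H_i` (with loops discarded):
`j ~ k` iff `p i j k + p i k j > 0`. -/
def diagram (A : SymAssocScheme X d) (i : Fin (d + 1)) : SimpleGraph (Fin (d + 1)) where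
  Adj j k := j ≠ k ∧ 0 < A.p i j k + A.p i k j
  symm := ⟨fun j k h => ⟨h.1.symm, by omega⟩⟩
  loopless := ⟨fun j h => h.1 rfl⟩

end SymAssocScheme

/-!
Distances in `Γ` are constant on each class, so the classes `j ∉ {0, 1}` realized at distance at
least 3 (the far classes) are exactly those with `p₁₁ʲ = 0`. Seen from a base vertex `x`, an edge
between two vertices at distance at least 2 from `x` is a triangle joining their classes in `H'`;
hence a vertex within distance 2 of a vertex `z` that is far from `x` has its class in the
component of the class of `(x, z)`, and all far classes lie in one component `C`.

If some class is far, take a class `s ∉ C` and `(x, z) ∈ R_s`. For a neighbour `y` of `x` there is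
`e` with `d(x, e) = 3` and `d(y, e) = 2`; the component of `s` forces `d(z, e) ≥ 3`, and if `y` were
not a neighbour of `z` this would put the class of `(z, y)`, which lies in the component of `s`,
into `C`. So `Γ(x) ⊆ Γ(z)`, i.e. `p₁₁ˢ = p₁₁⁰`. Classes with `p₁₁ˢ = p₁₁⁰` are isolated in `H'`,
so the non-trivial component `Ũ` is `C`, and every class outside `{0, 1} ∪ Ũ` lies in `Ĩ`.
-/

namespace SimpleGraph

variable {V : Type*} {G : SimpleGraph V}

lemma Connected.exists_adj_dist_eq_of_dist_eq_succ (hG : G.Connected) {a b : V} {n : ℕ}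
    (h : G.dist a b = n + 1) : ∃ c, G.dist a c = n ∧ G.Adj c b := by
  obtain ⟨w, hw⟩ := hG.exists_walk_length_eq_dist b a
  replace hw : w.length = n + 1 := by rw [hw, dist_comm, h]
  cases w with
  | nil => simp at hw
  | @cons _ c _ hbc w =>
    rw [Walk.length_cons, Nat.add_right_cancel_iff] at hw
    have hle : G.dist a c ≤ n := (dist_le w.reverse).trans_eq (by rw [Walk.length_reverse, hw])
    have hge : n ≤ G.dist a c := by
      have := hG.dist_triangle (u := a) (v := c) (w := b)
      rw [dist_eq_one_iff_adj.2 hbc.symm] at this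
      omega
    exact ⟨c, le_antisymm hle hge, hbc.symm⟩

lemma Connected.exists_adj_adj_of_dist_eq_two (hG : G.Connected) {a b : V}
    (h : G.dist a b = 2) : ∃ c, G.Adj a c ∧ G.Adj c b := by
  obtain ⟨c, hac, hcb⟩ := hG.exists_adj_dist_eq_of_dist_eq_succ h
  exact ⟨c, dist_eq_one_iff_adj.1 hac, hcb⟩

end SimpleGraph

namespace SymAssocScheme

open SimpleGraph

variable {X : Type*} [Fintype X] {d : ℕ} (A : SymAssocScheme X d)
  {i j k : Fin (d + 1)} {a b c x y z : X}

lemma R_self (a : X) : A.R 0 a a := (A.R_zero a a).2 rfl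

lemma eq_of_R_of_R (hi : A.R i a b) (hj : A.R j a b) : i = j :=
  (A.R_unique a b).unique hi hj

lemma p_pos_iff (h : A.R k a b) : 0 < A.p i j k ↔ ∃ c, A.R i a c ∧ A.R j c b := by
  rw [← A.p_spec i j k a b h, Set.ncard_pos]
  rfl

lemma exists_R (j : Fin (d + 1)) (x : X) : ∃ z, A.R j x z := by
  obtain ⟨a, b, hab⟩ := A.R_nonempty j
  have hp : 0 < A.p j j 0 := (A.p_pos_iff (A.R_self a)).2 ⟨b, hab, A.R_symm _ _ _ hab⟩
  obtain ⟨z, hz, -⟩ := (A.p_pos_iff (A.R_self x)).1 hp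
  exact ⟨z, hz⟩

lemma dist_le_one_of_R (h : A.R i a b) : (A.graph i).dist a b ≤ 1 := by
  by_cases hab : a = b
  · simp [hab]
  · exact (dist_eq_one_iff_adj.2 (show (A.graph i).Adj a b from ⟨hab, h⟩)).le

lemma dist_le_of_R_of_R (hconn : (A.graph i).Connected) {n : ℕ} {a' b' : X}
    (h : A.R j a b) (h' : A.R j a' b') (hn : (A.graph i).dist a b = n) :
    (A.graph i).dist a' b' ≤ n := by
  induction n generalizing j b b' with
  | zero =>
    obtain rfl := hconn.dist_eq_zero_iff.1 hn
    obtain rfl := A.eq_of_R_of_R h (A.R_self a)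
    simp [(A.R_zero a' b').1 h']
  | succ n ih =>
    obtain ⟨c, hac, hcb⟩ := hconn.exists_adj_dist_eq_of_dist_eq_succ hn
    obtain ⟨m, hm, -⟩ := A.R_unique a c
    obtain ⟨c', hm', hc'b'⟩ :=
      (A.p_pos_iff h').1 ((A.p_pos_iff (k := j) h).2 ⟨c, hm, hcb.2⟩)
    have := hconn.dist_triangle (u := a') (v := c') (w := b')
    have := ih hm hm' hac
    have := A.dist_le_one_of_R hc'b'
    omega

lemma dist_eq_of_R_of_R (hconn : (A.graph i).Connected) {a' b' : X}
    (h : A.R j a b) (h' : A.R j a' b') : (A.graph i).dist a' b' = (A.graph i).dist a b :=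
  le_antisymm (A.dist_le_of_R_of_R hconn h h' rfl) (A.dist_le_of_R_of_R hconn h' h rfl)

lemma exists_dist_eq_dist_of_R_of_R (hconn : (A.graph i).Connected) {a' b' : X}
    (h : A.R k a b) (h' : A.R k a' b') (c : X) :
    ∃ c', (A.graph i).dist a' c' = (A.graph i).dist a c ∧
      (A.graph i).dist c' b' = (A.graph i).dist c b := by
  obtain ⟨m, hm, -⟩ := A.R_unique a c
  obtain ⟨j, hj, -⟩ := A.R_unique c b
  obtain ⟨c', hm', hj'⟩ := (A.p_pos_iff h').1 ((A.p_pos_iff h).2 ⟨c, hm, hj⟩)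
  exact ⟨c', A.dist_eq_of_R_of_R hconn hm hm', A.dist_eq_of_R_of_R hconn hj hj'⟩

lemma two_le_dist_iff_of_R (hconn : (A.graph i).Connected) (h : A.R j a b) :
    2 ≤ (A.graph i).dist a b ↔ j ≠ 0 ∧ j ≠ i := by
  constructor
  · rintro hab
    refine ⟨?_, ?_⟩ <;> rintro rfl
    · simp [(A.R_zero a b).1 h] at hab
    · have := A.dist_le_one_of_R h
      omega
  · rintro ⟨hj0, hji⟩
    have hne : a ≠ b := by
      rintro rfl
      exact hj0 (A.eq_of_R_of_R h (A.R_self a))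
    exact hconn.one_lt_dist_of_ne_of_not_adj hne fun hadj => hji (A.eq_of_R_of_R h hadj.2)

lemma three_le_dist_of_p_eq_zero (hconn : (A.graph i).Connected) (hj : j ≠ 0 ∧ j ≠ i)
    (hp : A.p i i j = 0) (h : A.R j a b) : 3 ≤ (A.graph i).dist a b := by
  have h2 := (A.two_le_dist_iff_of_R hconn h).2 hj
  refine lt_of_le_of_ne h2 fun hab => ?_
  obtain ⟨c, hac, hcb⟩ := hconn.exists_adj_adj_of_dist_eq_two hab.symm
  have := (A.p_pos_iff h).2 ⟨c, hac.2, hcb.2⟩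
  omega

lemma dist_le_two_of_p_pos (hconn : (A.graph i).Connected)
    (hpos : ∀ j : Fin (d + 1), j ≠ 0 → j ≠ i → 0 < A.p i i j) (x y : X) :
    (A.graph i).dist x y ≤ 2 := by
  by_contra! hxy
  obtain ⟨j, hj, -⟩ := A.R_unique x y
  obtain ⟨hj0, hji⟩ := (A.two_le_dist_iff_of_R hconn hj).1 hxy.le
  obtain ⟨u, hxu, huy⟩ := (A.p_pos_iff hj).1 (hpos j hj0 hji)
  have := hconn.dist_triangle (u := x) (v := u) (w := y)
  have := A.dist_le_one_of_R hxu
  have := A.dist_le_one_of_R huy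
  omega

lemma p_eq_p_zero_iff (h : A.R j a b) :
    A.p i i j = A.p i i 0 ↔ ∀ c, A.R i a c → A.R i c b := by
  have hN : {c | A.R i a c ∧ A.R i c a} = {c | A.R i a c} := by
    ext c
    exact and_iff_left_of_imp (A.R_symm i a c)
  rw [← A.p_spec i i j a b h, ← A.p_spec i i 0 a a (A.R_self a), hN]
  constructor
  · intro hcard c hc
    exact ((Set.eq_of_subset_of_ncard_le (fun _ hc => hc.1) hcard.ge).symm.subset hc).2
  · intro hsub
    congr 1
    ext c
    exact and_iff_left_of_imp (hsub c)

lemma not_diagram_adj_of_p_eq_p_zero (hj : A.p i i j = A.p i i 0) (hk : k ≠ i) :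
    ¬ (A.diagram i).Adj j k := by
  rintro ⟨-, hpos⟩
  rcases Nat.eq_zero_or_pos (A.p i j k) with h0 | hjk
  · obtain ⟨a, b, hab⟩ := A.R_nonempty j
    obtain ⟨c, hac, hcb⟩ := (A.p_pos_iff hab).1 (by omega : 0 < A.p i k j)
    exact hk (A.eq_of_R_of_R hcb ((A.p_eq_p_zero_iff hab).1 hj c hac))
  · obtain ⟨a, b, hab⟩ := A.R_nonempty k
    obtain ⟨c, hac, hcb⟩ := (A.p_pos_iff hab).1 hjk
    exact hk (A.eq_of_R_of_R hab ((A.p_eq_p_zero_iff hcb).1 hj a (A.R_symm _ _ _ hac)))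

abbrev puncturedDiagram : SimpleGraph {j : Fin (d + 1) | j ≠ 0 ∧ j ≠ 1} :=
  (A.diagram 1).induce {j | j ≠ 0 ∧ j ≠ 1}

def component (j : Fin (d + 1)) (hj : j ≠ 0 ∧ j ≠ 1) :
    A.puncturedDiagram.ConnectedComponent :=
  connectedComponentMk _ ⟨j, hj⟩

lemma component_eq_of_triangle (hj : j ≠ 0 ∧ j ≠ 1) (hk : k ≠ 0 ∧ k ≠ 1)
    (hac : A.R j a c) (hcb : A.R 1 c b) (hab : A.R k a b) :
    A.component j hj = A.component k hk := by
  by_cases hjk : j = k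
  · subst hjk
    rfl
  · have hp : 0 < A.p 1 j k :=
      (A.p_pos_iff (A.R_symm _ _ _ hab)).2 ⟨c, A.R_symm _ _ _ hcb, A.R_symm _ _ _ hac⟩
    exact ConnectedComponent.sound
      (Adj.reachable (show (A.diagram 1).Adj j k from ⟨hjk, by omega⟩))

lemma component_eq_of_dist_le_two (hconn : (A.graph 1).Connected) (hj : j ≠ 0 ∧ j ≠ 1)
    (hk : k ≠ 0 ∧ k ≠ 1) (hy : A.R j x y) (hz : A.R k x z) (hxz : 3 ≤ (A.graph 1).dist x z)
    (hyz : (A.graph 1).dist y z ≤ 2) : A.component j hj = A.component k hk := by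
  rcases (by omega : (A.graph 1).dist y z = 0 ∨ (A.graph 1).dist y z = 1 ∨
      (A.graph 1).dist y z = 2) with h | h | h
  · obtain rfl := hconn.dist_eq_zero_iff.1 h
    obtain rfl := A.eq_of_R_of_R hy hz
    rfl
  · exact A.component_eq_of_triangle hj hk hy (dist_eq_one_iff_adj.1 h).2 hz
  · obtain ⟨u, hyu, huz⟩ := hconn.exists_adj_adj_of_dist_eq_two h
    obtain ⟨m, hu, -⟩ := A.R_unique x u
    have hm : m ≠ 0 ∧ m ≠ 1 := by
      refine (A.two_le_dist_iff_of_R hconn hu).1 ?_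
      have := hconn.dist_triangle (u := x) (v := u) (w := z)
      have := dist_eq_one_iff_adj.2 huz
      omega
    exact (A.component_eq_of_triangle hj hm hy hyu.2 hu).trans
      (A.component_eq_of_triangle hm hk hu huz.2 hz)

lemma component_eq_of_dist_le_three (hconn : (A.graph 1).Connected) (hj : j ≠ 0 ∧ j ≠ 1)
    (hk : k ≠ 0 ∧ k ≠ 1) (hy : A.R j x y) (hz : A.R k x z) (hxy : 3 ≤ (A.graph 1).dist x y)
    (hxz : 3 ≤ (A.graph 1).dist x z) (hyz : (A.graph 1).dist y z ≤ 3) :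
    A.component j hj = A.component k hk := by
  by_cases hyz2 : (A.graph 1).dist y z ≤ 2
  · exact A.component_eq_of_dist_le_two hconn hj hk hy hz hxz hyz2
  obtain ⟨u, hzu, huy⟩ := hconn.exists_adj_dist_eq_of_dist_eq_succ
    (show (A.graph 1).dist z y = 2 + 1 by rw [dist_comm]; omega)
  obtain ⟨m, hu, -⟩ := A.R_unique x u
  have hm : m ≠ 0 ∧ m ≠ 1 := by
    refine (A.two_le_dist_iff_of_R hconn hu).1 ?_
    have := hconn.dist_triangle (u := x) (v := u) (w := y)
    have := dist_eq_one_iff_adj.2 huy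
    omega
  exact (A.component_eq_of_triangle hm hj hu huy.2 hy).symm.trans
    (A.component_eq_of_dist_le_two hconn hm hk hu hz hxz (by rw [dist_comm]; omega))

lemma component_eq_of_dist_eq_three (hconn : (A.graph 1).Connected) (hj : j ≠ 0 ∧ j ≠ 1)
    (hk : k ≠ 0 ∧ k ≠ 1) {a' b' : X} (h : A.R j a b) (h' : A.R k a' b')
    (hab : (A.graph 1).dist a b = 3) (hab' : (A.graph 1).dist a' b' = 3) :
    A.component j hj = A.component k hk := by
  obtain ⟨z, hz⟩ := A.exists_R k a
  have haz : (A.graph 1).dist a z = 3 := (A.dist_eq_of_R_of_R hconn h' hz).trans hab'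
  by_cases hbz : (A.graph 1).dist b z ≤ 3
  · exact A.component_eq_of_dist_le_three hconn hj hk h hz (by omega) (by omega) hbz
  obtain ⟨q, hq, -⟩ := A.R_unique b z
  have hq' : q ≠ 0 ∧ q ≠ 1 := (A.two_le_dist_iff_of_R hconn hq).1 (by omega)
  have hba : (A.graph 1).dist b a = 3 := by rw [dist_comm, hab]
  have hza : (A.graph 1).dist z a = 3 := by rw [dist_comm, haz]
  have hzb : (A.graph 1).dist z b = (A.graph 1).dist b z := dist_comm
  have hqj : A.component q hq' = A.component j hj :=
    A.component_eq_of_dist_le_three hconn hq' hj hq (A.R_symm _ _ _ h) (by omega) (by omega)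
      (by omega)
  have hqk : A.component q hq' = A.component k hk :=
    A.component_eq_of_dist_le_three hconn hq' hk (A.R_symm _ _ _ hq) (A.R_symm _ _ _ hz)
      (by omega) (by omega) (by omega)
  exact hqj.symm.trans hqk

lemma exists_R_dist_eq_three_component_eq (hconn : (A.graph 1).Connected)
    (hj : j ≠ 0 ∧ j ≠ 1) (h : A.R j a b) (hab : 3 ≤ (A.graph 1).dist a b) :
    ∃ (k : Fin (d + 1)) (hk : k ≠ 0 ∧ k ≠ 1) (c : X),
      A.R k a c ∧ (A.graph 1).dist a c = 3 ∧ A.component k hk = A.component j hj := by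
  generalize hn : (A.graph 1).dist a b = n at hab
  induction n, hab using Nat.le_induction generalizing j b with
  | base => exact ⟨j, hj, b, h, hn, rfl⟩
  | succ n hn3 ih =>
    obtain ⟨c, hac, hcb⟩ := hconn.exists_adj_dist_eq_of_dist_eq_succ hn
    obtain ⟨m, hm, -⟩ := A.R_unique a c
    have hm' : m ≠ 0 ∧ m ≠ 1 := (A.two_le_dist_iff_of_R hconn hm).1 (by omega)
    obtain ⟨k, hk, e, hke, hae, hkm⟩ := ih hm' hm hac
    exact ⟨k, hk, e, hke, hae, hkm.trans (A.component_eq_of_triangle hm' hj hm hcb.2 h)⟩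

lemma component_eq_of_three_le_dist (hconn : (A.graph 1).Connected) (hj : j ≠ 0 ∧ j ≠ 1)
    (hk : k ≠ 0 ∧ k ≠ 1) {a' b' : X} (h : A.R j a b) (h' : A.R k a' b')
    (hab : 3 ≤ (A.graph 1).dist a b) (hab' : 3 ≤ (A.graph 1).dist a' b') :
    A.component j hj = A.component k hk := by
  obtain ⟨j₃, hj₃, c, hc, hac, hj₃j⟩ :=
    A.exists_R_dist_eq_three_component_eq hconn hj h hab
  obtain ⟨k₃, hk₃, c', hc', hac', hk₃k⟩ :=
    A.exists_R_dist_eq_three_component_eq hconn hk h' hab'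
  rw [← hj₃j, ← hk₃k]
  exact A.component_eq_of_dist_eq_three hconn hj₃ hk₃ hc hc' hac hac'

lemma exists_dist_eq_three_dist_eq_two (hconn : (A.graph 1).Connected)
    (hab : (A.graph 1).dist a b = 3) (hxy : A.R 1 x y) :
    ∃ e, (A.graph 1).dist x e = 3 ∧ (A.graph 1).dist y e = 2 := by
  obtain ⟨c, hbc, hca⟩ := hconn.exists_adj_dist_eq_of_dist_eq_succ
    (show (A.graph 1).dist b a = 2 + 1 by rw [dist_comm]; omega)
  obtain ⟨e, hxe, hey⟩ :=
    A.exists_dist_eq_dist_of_R_of_R hconn (A.R_symm _ _ _ hca.2) hxy b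
  exact ⟨e, hxe.trans hab, by rw [dist_comm, hey, hbc]⟩

lemma component_eq_of_p_eq_zero (hconn : (A.graph 1).Connected) {s : Fin (d + 1)}
    (hj : j ≠ 0 ∧ j ≠ 1) (hp : A.p 1 1 j = 0) (hs : s ≠ 0 ∧ s ≠ 1)
    (hsI : A.p 1 1 s ≠ A.p 1 1 0) : A.component s hs = A.component j hj := by
  by_contra hne
  obtain ⟨a, b, hab⟩ := A.R_nonempty j
  have hab3 := A.three_le_dist_of_p_eq_zero hconn hj hp hab
  obtain ⟨-, -, b₃, -, hab₃, -⟩ := A.exists_R_dist_eq_three_component_eq hconn hj hab hab3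
  have hdeep {k : Fin (d + 1)} {u v : X} (huv : A.R k u v) (h3 : 3 ≤ (A.graph 1).dist u v) :
      ∃ hk : k ≠ 0 ∧ k ≠ 1, A.component k hk = A.component j hj :=
    have hk := (A.two_le_dist_iff_of_R hconn huv).1 (by omega)
    ⟨hk, A.component_eq_of_three_le_dist hconn hk hj huv hab h3 hab3⟩
  obtain ⟨x, z, hxz⟩ := A.R_nonempty s
  refine hsI ((A.p_eq_p_zero_iff hxz).2 fun y hxy => ?_)
  by_contra hyz
  obtain ⟨t, hzy, -⟩ := A.R_unique z y
  have ht : t ≠ 0 ∧ t ≠ 1 := by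
    refine ⟨?_, fun ht1 => hyz (A.R_symm _ _ _ (ht1 ▸ hzy))⟩
    rintro rfl
    obtain rfl := (A.R_zero z y).1 hzy
    exact hs.2 (A.eq_of_R_of_R hxz hxy)
  have hst : A.component s hs = A.component t ht :=
    A.component_eq_of_triangle hs ht (A.R_symm _ _ _ hxz) hxy hzy
  obtain ⟨e, hxe, hye⟩ := A.exists_dist_eq_three_dist_eq_two hconn hab₃ hxy
  obtain ⟨m, hm, -⟩ := A.R_unique x e
  obtain ⟨hm', hmj⟩ := hdeep hm (by omega)
  have hze : 3 ≤ (A.graph 1).dist z e := by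
    by_contra! hze
    exact hne ((A.component_eq_of_dist_le_two hconn hs hm' hxz hm (by omega) (by omega)).trans hmj)
  obtain ⟨n, hn, -⟩ := A.R_unique z e
  obtain ⟨hn', hnj⟩ := hdeep hn hze
  exact hne (hst.trans ((A.component_eq_of_dist_le_two hconn ht hn' hzy hn hze hye.le).trans hnj))

lemma p_ne_p_zero_of_mem_supp {c : A.puncturedDiagram.ConnectedComponent}
    (hc : c.supp.Nontrivial) {v : {j : Fin (d + 1) | j ≠ 0 ∧ j ≠ 1}} (hv : v ∈ c.supp) :
    A.p 1 1 v ≠ A.p 1 1 0 := by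
  intro hvI
  obtain ⟨w, hw, hwv⟩ := hc.exists_ne v
  obtain ⟨u, hvu⟩ :=
    (mem_support _).1 (mem_support_of_reachable hwv.symm (c.reachable_of_mem_supp hv hw))
  exact A.not_diagram_adj_of_p_eq_p_zero hvI u.2.2 hvu

end SymAssocScheme

open SymAssocScheme in
theorem diameter_two_of_W_nonempty_general {X : Type*} [Fintype X] {d : ℕ}
    (A : SymAssocScheme X d) (hconn : (A.graph 1).Connected)
    (Itil : Set (Fin (d + 1)))
    (hI : Itil = {j : Fin (d + 1) | j ≠ 0 ∧ A.p 1 1 j = A.p 1 1 0})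
    (Util : Finset (Fin (d + 1)))
    (hU : ∃ c : ((A.diagram 1).induce
          {j : Fin (d + 1) | j ≠ 0 ∧ j ≠ 1}).ConnectedComponent,
        (Util : Set (Fin (d + 1))) = Subtype.val '' c.supp ∧ c.supp.Nontrivial)
    (Wtil : Set (Fin (d + 1)))
    (hW : Wtil = {j : Fin (d + 1) | j ≠ 0 ∧ j ≠ 1 ∧ j ∉ Itil ∧ j ∉ Util})
    (hWne : Wtil.Nonempty) :
    (∀ x y : X, (A.graph 1).dist x y ≤ 2) ∧
    (∀ j : Fin (d + 1), j ≠ 0 → j ≠ 1 → 0 < A.p 1 1 j) := by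
  subst hI hW
  have hpos : ∀ j : Fin (d + 1), j ≠ 0 → j ≠ 1 → 0 < A.p 1 1 j := by
    intro j hj0 hj1
    by_contra! hp
    replace hp : A.p 1 1 j = 0 := Nat.le_zero.1 hp
    obtain ⟨c, hcU, hc⟩ := hU
    obtain ⟨v, hv⟩ := hc.nonempty
    have hcj : c = A.component j ⟨hj0, hj1⟩ := by
      rw [← (c.mem_supp_iff v).1 hv]
      exact A.component_eq_of_p_eq_zero hconn _ hp v.2 (A.p_ne_p_zero_of_mem_supp hc hv)
    obtain ⟨w, hw0, hw1, hwI, hwU⟩ := hWne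
    by_cases hwj : A.component w ⟨hw0, hw1⟩ = A.component j ⟨hj0, hj1⟩
    · have hwc : ⟨w, hw0, hw1⟩ ∈ c.supp := (c.mem_supp_iff _).2 (hcj ▸ hwj)
      exact hwU (Finset.mem_coe.1 (hcU ▸ ⟨_, hwc, rfl⟩))
    · refine hwI ⟨hw0, ?_⟩
      by_contra hwI'
      exact hwj (A.component_eq_of_p_eq_zero hconn _ hp _ hwI')
  exact ⟨A.dist_le_two_of_p_pos hconn hpos, hpos⟩

open SymAssocScheme in
/-- Lemma 3.10: with `Γ = (X, R_1)` connected, `H' = H \ {0,1}` disconnected,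
`Ĩ = {i ≠ 0 : p_{11}^i = p_{11}^0}`, `Ũ` the vertex set of a non-singleton component
of `H'` minimizing `∑_{i ∈ Ũ} v_i`, and `W̃ = {2,…,d} \ (Ĩ ∪ Ũ)` nonempty:
`Γ` has diameter two, i.e. all distances are at most `2` and `p_{11}^i > 0` for
every `i > 1`. -/
theorem diameter_two_of_W_nonempty {X : Type*} [Fintype X] {d : ℕ} (hd : 0 < d)
    (A : SymAssocScheme X d) (hconn : (A.graph 1).Connected)
    (hH' : ¬ ((A.diagram 1).induce {j : Fin (d + 1) | j ≠ 0 ∧ j ≠ 1}).Connected)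
    (Itil : Set (Fin (d + 1)))
    (hI : Itil = {j : Fin (d + 1) | j ≠ 0 ∧ A.p 1 1 j = A.p 1 1 0})
    (Util : Finset (Fin (d + 1)))
    (hU : ∃ c : ((A.diagram 1).induce
          {j : Fin (d + 1) | j ≠ 0 ∧ j ≠ 1}).ConnectedComponent,
        (Util : Set (Fin (d + 1))) = Subtype.val '' c.supp ∧ c.supp.Nontrivial)
    (hUmin : ∀ U' : Finset (Fin (d + 1)),
        (∃ c : ((A.diagram 1).induce
            {j : Fin (d + 1) | j ≠ 0 ∧ j ≠ 1}).ConnectedComponent,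
          (U' : Set (Fin (d + 1))) = Subtype.val '' c.supp ∧ c.supp.Nontrivial) →
        ∑ j ∈ Util, A.p j j 0 ≤ ∑ j ∈ U', A.p j j 0)
    (Wtil : Set (Fin (d + 1)))
    (hW : Wtil = {j : Fin (d + 1) | j ≠ 0 ∧ j ≠ 1 ∧ j ∉ Itil ∧ j ∉ Util})
    (hWne : Wtil.Nonempty) :
    (∀ x y : X, (A.graph 1).dist x y ≤ 2) ∧
    (∀ j : Fin (d + 1), j ≠ 0 → j ≠ 1 → 0 < A.p 1 1 j) :=
  diameter_two_of_W_nonempty_general A hconn Itil hI Util hU Wtil hW hWne
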